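/- Let â, ŝ, r̂, ê, b̂, ĉ, f̂, ĝ be positive real numbers with r̂·ŝ > (â+ŝ)·ê. Then the algebraic system 0 = r̂V₂ - (â+ŝ+b̂V₁+ĉV₂)V₁, 0 = ŝV₁ - (ê+f̂V₂+ĝV₁)V₂ has at least one solution (V₁,V₂) with V₁ > 0 and V₂ > 0. -/

import Mathlib

/-- If `â, ŝ, r̂, ê, b̂, ĉ, f̂, ĝ > 0` and `r̂·ŝ > (â+ŝ)·ê`, then the kinetic system
`0 = r̂V₂ - (â+ŝ+b̂V₁+ĉV₂)V₁`, `0 = ŝV₁ - (ê+f̂V₂+ĝV₁)V₂` has a positive solution. -/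
theorem kinetic_system_positive_solution
    (a s r e b c f g : ℝ)
    (ha : 0 < a) (hs : 0 < s) (hr : 0 < r) (he : 0 < e)
    (hb : 0 < b) (hc : 0 < c) (hf : 0 < f) (hg : 0 < g)
    (hcond : (a + s) * e < r * s) :
    ∃ V₁ V₂ : ℝ, 0 < V₁ ∧ 0 < V₂ ∧
      0 = r * V₂ - (a + s + b * V₁ + c * V₂) * V₁ ∧
      0 = s * V₁ - (e + f * V₂ + g * V₁) * V₂ := by
  -- reduce to finding a slope t with V₂ = t V₁
  set t₀ : ℝ := (a + s) / r with ht₀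
  set t₁ : ℝ := s / e with ht₁
  have ht₀pos : 0 < t₀ := by positivity
  have ht₀₁ : t₀ < t₁ := by
    rw [ht₀, ht₁, div_lt_div_iff₀ hr he]
    linarith
  set φ : ℝ → ℝ := fun t =>
    (r * t - (a + s)) * (t * (f * t + g)) - (s - e * t) * (b + c * t) with hφ
  have hcont : ContinuousOn φ (Set.Icc t₀ t₁) := by
    apply Continuous.continuousOn; rw [hφ]; continuity
  have hφ0 : φ t₀ < 0 := by
    have h1 : r * t₀ - (a + s) = 0 := by
      rw [ht₀]; field_simp; ring
    have h2 : 0 < s - e * t₀ := by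
      rw [ht₀, sub_pos, ← mul_div_assoc, div_lt_iff₀ hr]
      nlinarith
    have h3 : 0 < b + c * t₀ := by positivity
    rw [hφ]; simp only [h1, zero_mul, zero_sub, neg_neg]
    nlinarith
  have hφ1 : 0 < φ t₁ := by
    have ht₁pos : 0 < t₁ := lt_trans ht₀pos ht₀₁
    have h1 : s - e * t₁ = 0 := by rw [ht₁]; field_simp; ring
    have h2 : 0 < r * t₁ - (a + s) := by
      rw [ht₁, sub_pos, ← mul_div_assoc, lt_div_iff₀ he]
      nlinarith
    rw [hφ]; simp only [h1, zero_mul, sub_zero]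
    positivity
  obtain ⟨t, htmem, htz⟩ : ∃ t ∈ Set.Icc t₀ t₁, φ t = 0 := by
    have := intermediate_value_Icc ht₀₁.le hcont
    have h0 : (0 : ℝ) ∈ Set.Icc (φ t₀) (φ t₁) := ⟨hφ0.le, hφ1.le⟩
    obtain ⟨t, ht, htz⟩ := this h0
    exact ⟨t, ht, htz⟩
  have htne0 : t ≠ t₀ := fun h => by rw [h] at htz; exact hφ0.ne htz
  have htne1 : t ≠ t₁ := fun h => by rw [h] at htz; exact hφ1.ne' htz
  have ht₀t : t₀ < t := lt_of_le_of_ne htmem.1 (Ne.symm htne0)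
  have htt₁ : t < t₁ := lt_of_le_of_ne htmem.2 htne1
  have htpos : 0 < t := lt_trans ht₀pos ht₀t
  have hrt : 0 < r * t - (a + s) := by
    have : a + s = r * t₀ := by rw [ht₀]; field_simp
    rw [this]; have := mul_lt_mul_of_pos_left ht₀t hr; linarith
  have hst : 0 < s - e * t := by
    have : s = e * t₁ := by rw [ht₁]; field_simp
    rw [this]; have := mul_lt_mul_of_pos_left htt₁ he; linarith
  have hbct : 0 < b + c * t := by positivity
  set V₁ : ℝ := (r * t - (a + s)) / (b + c * t) with hV₁
  have hV₁pos : 0 < V₁ := div_pos hrt hbct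
  have hkey : (b + c * t) * V₁ = r * t - (a + s) := by
    rw [hV₁]; field_simp
  refine ⟨V₁, t * V₁, hV₁pos, mul_pos htpos hV₁pos, ?_, ?_⟩
  · linear_combination V₁ * hkey
  · -- second equation from φ t = 0
    have hφt : (r * t - (a + s)) * (t * (f * t + g)) = (s - e * t) * (b + c * t) := by
      rw [hφ] at htz; simp only at htz; linarith
    have h2 : (t * (f * t + g)) * V₁ = s - e * t := by
      have : (t * (f * t + g)) * V₁ * (b + c * t) = (s - e * t) * (b + c * t) := by
        calc (t * (f * t + g)) * V₁ * (b + c * t)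
            = (r * t - (a + s)) * (t * (f * t + g)) := by
              rw [mul_assoc, mul_comm V₁, hkey]; ring
          _ = (s - e * t) * (b + c * t) := hφt
      exact mul_right_cancel₀ hbct.ne' this
    linear_combination V₁ * h2
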